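/- Let h ∈ ℝ⁸ and let J(h) be the 5×5 skew-symmetric matrix with J12 = h3, J13 = h4, J14 = h6, J15 = h7, J23 = h5, J24 = h7, J25 = h8, J34 = J35 = J45 = 0. Set Δ = h6h8 - h7², Δ1 = h5h7 - h4h8, Δ2 = h5h6 - h4h7. Then: (i) if Δ² + Δ1² + Δ2² ≠ 0, rank J(h) = 4; (ii) if Δ = Δ1 = Δ2 = 0 but (h3,...,h8) ≠ 0, rank J(h) = 2; (iii) if h3 = h4 = ... = h8 = 0, rank J(h) = 0. -/

import Mathlib

/- Dimensions of coadjoint orbits: rank of the Poisson structure matrix J(h)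
on the dual of the (2,3,5,8) Carnot algebra, in all cases. -/

noncomputable section

/-- The 5×5 skew-symmetric Poisson structure matrix J(h), where
h = (h1,...,h8) with 0-based indexing (h i = h_{i+1}). -/
noncomputable def J (h : Fin 8 → ℝ) : Matrix (Fin 5) (Fin 5) ℝ :=
  !![0, h 2, h 3, h 5, h 6;
     -(h 2), 0, h 4, h 6, h 7;
     -(h 3), -(h 4), 0, 0, 0;
     -(h 5), -(h 6), 0, 0, 0;
     -(h 6), -(h 7), 0, 0, 0]

/-- Δ = h6h8 - h7². -/
noncomputable def Δ (h : Fin 8 → ℝ) : ℝ := h 5 * h 7 - (h 6)^2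
/-- Δ1 = h5h7 - h4h8. -/
noncomputable def Δ₁ (h : Fin 8 → ℝ) : ℝ := h 4 * h 6 - h 3 * h 7
/-- Δ2 = h5h6 - h4h7. -/
noncomputable def Δ₂ (h : Fin 8 → ℝ) : ℝ := h 4 * h 5 - h 3 * h 6

/-! `J h` is skew-symmetric of odd size, hence singular, so its rank is at most 4. Its principal
4×4 minors on the indices {1,2,4,5}, {1,2,3,5}, {1,2,3,4} equal `Δ²`, `Δ₁²`, `Δ₂²` (a 4×4
skew-symmetric determinant is the square of its Pfaffian), which gives rank 4 in case (i).

The numbers `Δ`, `-Δ₁`, `-Δ₂` are the 2×2 minors of the upper right 2×3 block `B` of `J h`. If they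
vanish, `B = u vᵀ` with `u ≠ 0`, and then `J h = x yᵀ - y xᵀ` with `x = (u, 0)` and
`y = (c u^⊥, v)` for a suitable scalar `c`, so the rank is at most 2. Conversely a nonzero entry
`J i j` of a skew-symmetric matrix gives the principal 2×2 minor `(J i j)² ≠ 0`. -/

namespace Matrix

variable {R : Type*} [CommRing R] {n : Type*} [Fintype n]

theorem card_le_rank_of_det_submatrix_ne_zero [IsDomain R] {m ι : Type*} [Fintype ι]
    [DecidableEq ι] (A : Matrix m n R) (r : ι → m) (c : ι → n)
    (h : (A.submatrix r c).det ≠ 0) : Fintype.card ι ≤ A.rank :=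
  (rank_of_det_ne_zero h).symm.trans_le (rank_submatrix_le A r c)

theorem rank_lt_card_of_det_eq_zero [DecidableEq n] {K : Type*} [Field K] (A : Matrix n n K)
    (h : A.det = 0) : A.rank < Fintype.card n := by
  obtain ⟨v, hv, hAv⟩ := exists_mulVec_eq_zero_iff.mpr h
  have hker : 0 < Module.finrank K (LinearMap.ker A.mulVecLin) :=
    Module.finrank_pos_iff_exists_ne_zero.mpr ⟨⟨v, hAv⟩, fun h0 => hv (congrArg Subtype.val h0)⟩
  calc A.rank < A.rank + Module.finrank K (LinearMap.ker A.mulVecLin) := by omega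
    _ = Fintype.card n := by
      rw [rank, LinearMap.finrank_range_add_finrank_ker, Module.finrank_fintype_fun_eq_card]

theorem det_eq_zero_of_transpose_eq_neg [DecidableEq n] [IsDomain R] [CharZero R]
    {A : Matrix n n R} (hA : Aᵀ = -A) (hn : Odd (Fintype.card n)) : A.det = 0 :=
  self_eq_neg.mp <| calc
    A.det = Aᵀ.det := (det_transpose A).symm
    _ = -A.det := by rw [hA, det_neg, hn.neg_one_pow, neg_one_mul]

theorem two_le_rank_of_transpose_eq_neg [IsDomain R] [CharZero R] {A : Matrix n n R}
    (hA : Aᵀ = -A) {i j : n} (hij : A i j ≠ 0) : 2 ≤ A.rank := by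
  have skew : ∀ k l, A l k = -A k l := fun k l => congrFun (congrFun hA k) l
  have hdiag : ∀ k, A k k = 0 := fun k => self_eq_neg.mp (skew k k)
  have hminor : (A.submatrix ![i, j] ![i, j]).det = A i j ^ 2 := by
    rw [det_fin_two]
    simp [hdiag, skew i j, sq]
  simpa using card_le_rank_of_det_submatrix_ne_zero A ![i, j] ![i, j] (hminor ▸ pow_ne_zero 2 hij)

theorem rank_vecMulVec_sub_vecMulVec_le_two [Nontrivial R] (x y : n → R) :
    (vecMulVec x y - vecMulVec y x).rank ≤ 2 := by
  have hfactor : vecMulVec x y - vecMulVec y x =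
      of (fun i k => ![x i, y i] k) * of (fun k j => ![y j, -x j] k) := by
    ext i j
    simp [vecMulVec_apply, mul_apply, Fin.sum_univ_two, sub_eq_add_neg]
  rw [hfactor]
  exact (rank_mul_le_left _ _).trans ((rank_le_card_width _).trans_eq (Fintype.card_fin 2))

theorem det_fin_four_skew (a p q r s : R) :
    !![0, a, p, q; -a, 0, r, s; -p, -r, 0, 0; -q, -s, 0, 0].det = (p * s - q * r) ^ 2 := by
  simp [det_succ_row_zero, Fin.sum_univ_succ, Fin.succAbove]
  ring

theorem exists_eq_vecMulVec_of_minors_eq_zero {K m n : Type*} [Field K] [Nonempty m]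
    (B : Matrix m n K) (hB : ∀ i i' j j', B i j * B i' j' = B i j' * B i' j) :
    ∃ u v, u ≠ 0 ∧ B = vecMulVec u v := by
  by_cases h0 : B = 0
  · exact ⟨fun _ => 1, 0, Function.ne_iff.mpr ⟨Classical.arbitrary m, one_ne_zero⟩,
      by ext; simp [h0, vecMulVec_apply]⟩
  obtain ⟨i₀, j₀, hij⟩ : ∃ i j, B i j ≠ 0 := by
    by_contra! h
    exact h0 (ext h)
  refine ⟨fun i => B i j₀, fun j => B i₀ j / B i₀ j₀, Function.ne_iff.mpr ⟨i₀, hij⟩, ?_⟩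
  ext i j
  rw [vecMulVec_apply, mul_div_assoc', eq_div_iff hij, ← hB]

end Matrix

open scoped Matrix

open Matrix (vecMulVec vecMulVec_apply)

def JBlock (h : Fin 8 → ℝ) : Matrix (Fin 2) (Fin 3) ℝ :=
  !![h 3, h 5, h 6; h 4, h 6, h 7]

theorem J_transpose (h : Fin 8 → ℝ) : (J h)ᵀ = -J h := by
  ext i j
  fin_cases i <;> fin_cases j <;> simp [J]

theorem JBlock_minors_eq_zero {h : Fin 8 → ℝ} (hΔ : Δ h = 0) (hΔ₁ : Δ₁ h = 0) (hΔ₂ : Δ₂ h = 0)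
    (i i' : Fin 2) (j j' : Fin 3) :
    JBlock h i j * JBlock h i' j' = JBlock h i j' * JBlock h i' j := by
  rw [Δ, sub_eq_zero] at hΔ
  rw [Δ₁, sub_eq_zero] at hΔ₁
  rw [Δ₂, sub_eq_zero] at hΔ₂
  fin_cases i <;> fin_cases i' <;> fin_cases j <;> fin_cases j' <;> simp [JBlock] <;> linarith

theorem exists_J_eq_vecMulVec_sub_vecMulVec {h : Fin 8 → ℝ} (hΔ : Δ h = 0) (hΔ₁ : Δ₁ h = 0)
    (hΔ₂ : Δ₂ h = 0) : ∃ x y : Fin 5 → ℝ, J h = vecMulVec x y - vecMulVec y x := by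
  obtain ⟨u, v, hu, huv⟩ := Matrix.exists_eq_vecMulVec_of_minors_eq_zero (JBlock h)
    (JBlock_minors_eq_zero hΔ hΔ₁ hΔ₂)
  have hB : ∀ i j, JBlock h i j = u i * v j := fun i j => by rw [huv, vecMulVec_apply]
  obtain ⟨c, hc⟩ : ∃ c, c * (u 0 * u 0 + u 1 * u 1) = h 2 := by
    refine ⟨h 2 / (u 0 * u 0 + u 1 * u 1), div_mul_cancel₀ _ ?_⟩
    simpa [dotProduct, Fin.sum_univ_two] using mt dotProduct_self_eq_zero.mp hu
  refine ⟨![u 0, u 1, 0, 0, 0], ![-(c * u 1), c * u 0, v 0, v 1, v 2], ?_⟩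
  ext i j
  fin_cases i <;> fin_cases j <;> simp [J, JBlock, ← hB, mul_comm (v _) (u _)]
  all_goals first | ring1 | linear_combination hc | linear_combination -hc

theorem rank_J_le_two {h : Fin 8 → ℝ} (hΔ : Δ h = 0) (hΔ₁ : Δ₁ h = 0) (hΔ₂ : Δ₂ h = 0) :
    (J h).rank ≤ 2 := by
  obtain ⟨x, y, hxy⟩ := exists_J_eq_vecMulVec_sub_vecMulVec hΔ hΔ₁ hΔ₂
  exact hxy ▸ Matrix.rank_vecMulVec_sub_vecMulVec_le_two x y

theorem rank_J_lt_five (h : Fin 8 → ℝ) : (J h).rank < 5 :=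
  Matrix.rank_lt_card_of_det_eq_zero _
    (Matrix.det_eq_zero_of_transpose_eq_neg (J_transpose h) (by decide))

theorem four_le_rank_J {h : Fin 8 → ℝ} (hΔ : Δ h ≠ 0 ∨ Δ₁ h ≠ 0 ∨ Δ₂ h ≠ 0) :
    4 ≤ (J h).rank := by
  obtain ⟨r, hr⟩ : ∃ r : Fin 4 → Fin 5, ((J h).submatrix r r).det ≠ 0 := by
    rcases hΔ with hΔ | hΔ₁ | hΔ₂
    · refine ⟨![0, 1, 3, 4], ?_⟩
      rw [show (J h).submatrix ![0, 1, 3, 4] ![0, 1, 3, 4] =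
          !![0, h 2, h 5, h 6; -(h 2), 0, h 6, h 7; -(h 5), -(h 6), 0, 0; -(h 6), -(h 7), 0, 0] by
        ext i j; fin_cases i <;> fin_cases j <;> rfl, Matrix.det_fin_four_skew]
      exact pow_ne_zero 2 (by rwa [← sq])
    · refine ⟨![0, 1, 2, 4], ?_⟩
      rw [show (J h).submatrix ![0, 1, 2, 4] ![0, 1, 2, 4] =
          !![0, h 2, h 3, h 6; -(h 2), 0, h 4, h 7; -(h 3), -(h 4), 0, 0; -(h 6), -(h 7), 0, 0] by
        ext i j; fin_cases i <;> fin_cases j <;> rfl, Matrix.det_fin_four_skew]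
      exact pow_ne_zero 2 fun h0 => hΔ₁ (by rw [Δ₁]; linarith)
    · refine ⟨![0, 1, 2, 3], ?_⟩
      rw [show (J h).submatrix ![0, 1, 2, 3] ![0, 1, 2, 3] =
          !![0, h 2, h 3, h 5; -(h 2), 0, h 4, h 6; -(h 3), -(h 4), 0, 0; -(h 5), -(h 6), 0, 0] by
        ext i j; fin_cases i <;> fin_cases j <;> rfl, Matrix.det_fin_four_skew]
      exact pow_ne_zero 2 fun h0 => hΔ₂ (by rw [Δ₂]; linarith)
  simpa using Matrix.card_le_rank_of_det_submatrix_ne_zero _ _ _ hr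

theorem two_le_rank_J {h : Fin 8 → ℝ}
    (hne : h 2 ≠ 0 ∨ h 3 ≠ 0 ∨ h 4 ≠ 0 ∨ h 5 ≠ 0 ∨ h 6 ≠ 0 ∨ h 7 ≠ 0) : 2 ≤ (J h).rank := by
  obtain ⟨i, j, hij⟩ : ∃ i j, J h i j ≠ 0 := by
    rcases hne with hk | hk | hk | hk | hk | hk
    exacts [⟨0, 1, hk⟩, ⟨0, 2, hk⟩, ⟨1, 2, hk⟩, ⟨0, 3, hk⟩, ⟨0, 4, hk⟩, ⟨1, 4, hk⟩]
  exact Matrix.two_le_rank_of_transpose_eq_neg (J_transpose h) hij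

theorem J_eq_zero {h : Fin 8 → ℝ} (h2 : h 2 = 0) (h3 : h 3 = 0) (h4 : h 4 = 0) (h5 : h 5 = 0)
    (h6 : h 6 = 0) (h7 : h 7 = 0) : J h = 0 := by
  ext i j
  fin_cases i <;> fin_cases j <;> simp [J, h2, h3, h4, h5, h6, h7]

theorem rank_J_cases (h : Fin 8 → ℝ) :
    ((Δ h)^2 + (Δ₁ h)^2 + (Δ₂ h)^2 ≠ 0 → (J h).rank = 4) ∧
    (Δ h = 0 → Δ₁ h = 0 → Δ₂ h = 0 →
      (h 2 ≠ 0 ∨ h 3 ≠ 0 ∨ h 4 ≠ 0 ∨ h 5 ≠ 0 ∨ h 6 ≠ 0 ∨ h 7 ≠ 0) →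
      (J h).rank = 2) ∧
    (h 2 = 0 → h 3 = 0 → h 4 = 0 → h 5 = 0 → h 6 = 0 → h 7 = 0 →
      (J h).rank = 0) := by
  refine ⟨fun hsum => ?_, fun hΔ hΔ₁ hΔ₂ hne => ?_, fun h2 h3 h4 h5 h6 h7 => ?_⟩
  · have hΔ : Δ h ≠ 0 ∨ Δ₁ h ≠ 0 ∨ Δ₂ h ≠ 0 := by
      contrapose! hsum
      simp [hsum]
    exact le_antisymm (Nat.le_of_lt_succ (rank_J_lt_five h)) (four_le_rank_J hΔ)
  · exact le_antisymm (rank_J_le_two hΔ hΔ₁ hΔ₂) (two_le_rank_J hne)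
  · rw [J_eq_zero h2 h3 h4 h5 h6 h7, Matrix.rank_zero]

end
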